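/- arXiv:1607.02317 — 4 statements merged into one kernel-verified Lean document; each statement's English description precedes it below -/
import Mathlib

section
/- Let P ∈ ℕ with P ≥ 1 and let C_1, …, C_P be nonnegative reals. Let N_1, …, N_P be independent random variables on a probability space, with N_q Poisson distributed with mean C_q for each q. Define the random variable Σ = Σ_{q=1}^P q·N_q. Then ℙ(Σ = 0) = exp(−Σ_{q=1}^P C_q), and for every integer m ≥ 1, ℙ(Σ = m) = Σ_{q=1}^{min(m,P)} (q/m)·C_q·ℙ(Σ = m − q). -/
/-!
For `N ~ Poisson(c)` one has the size-bias identity `E[N g(N)] = c E[g(N + 1)]`, coming from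
`k · Po(c){k} = c · Po(c){k - 1}`; it survives an independent second argument `g(N, Y)`.
Multiply `1{S = m}` by `m = ∑_q q N_q` and take expectations: since `N_q` is independent of
`S - q N_q`, the size-bias identity turns `E[N_q 1{S = m}]` into `C_q P(S + q = m)`, which gives
`m P(S = m) = ∑_q q C_q P(S = m - q)`. The case `m = 0` is `P(∀ q, N_q = 0) = ∏ e^{-C_q}`.
-/

open MeasureTheory ProbabilityTheory
open scoped NNReal ENNReal

namespace ProbabilityTheory

variable {Ω α β ι : Type*} {mΩ : MeasurableSpace Ω} {mα : MeasurableSpace α}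
  {mβ : MeasurableSpace β} {μ : Measure Ω}

lemma lintegral_ite_one {p : Ω → Prop} [DecidablePred p] (hp : MeasurableSet {ω | p ω}) :
    ∫⁻ ω, (if p ω then 1 else 0) ∂μ = μ {ω | p ω} := by
  rw [← lintegral_indicator_one hp]
  congr 1 with ω
  simp [Set.indicator_apply]

lemma IndepFun.lintegral_comp_prodMk [IsFiniteMeasure μ] {X : Ω → α} {Y : Ω → β}
    (hX : Measurable X) (hY : Measurable Y) (hXY : IndepFun X Y μ) {F : α × β → ℝ≥0∞}
    (hF : Measurable F) :
    ∫⁻ ω, F (X ω, Y ω) ∂μ = ∫⁻ y, ∫⁻ x, F (x, y) ∂μ.map X ∂μ.map Y := by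
  rw [← lintegral_prod_symm' F hF, ← hXY.map_prod_eq_prod_map_map hX.aemeasurable hY.aemeasurable,
    lintegral_map hF (hX.prodMk hY)]

lemma natCast_mul_poissonMeasure_singleton_succ (r : ℝ≥0) (k : ℕ) :
    ((k + 1 : ℕ) : ℝ≥0∞) * poissonMeasure r {k + 1} = r * poissonMeasure r {k} := by
  rw [poissonMeasure_singleton, poissonMeasure_singleton, ← ENNReal.ofReal_natCast,
    ← ENNReal.ofReal_coe_nnreal, ← ENNReal.ofReal_mul (by positivity),
    ← ENNReal.ofReal_mul (by positivity), Nat.factorial_succ]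
  congr 1
  push_cast
  field_simp
  ring

lemma lintegral_natCast_mul_poissonMeasure (r : ℝ≥0) (h : ℕ → ℝ≥0∞) :
    ∫⁻ k, k * h k ∂poissonMeasure r = r * ∫⁻ k, h (k + 1) ∂poissonMeasure r := by
  rw [lintegral_countable', lintegral_countable', tsum_eq_zero_add' ENNReal.summable,
    ← ENNReal.tsum_mul_left]
  simp only [CharP.cast_eq_zero, zero_mul, zero_add]
  congr 1 with k
  rw [mul_left_comm, ← natCast_mul_poissonMeasure_singleton_succ]
  ring

lemma IndepFun.lintegral_natCast_mul_of_poisson [IsFiniteMeasure μ] {X : Ω → ℕ} {Y : Ω → β}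
    (hX : Measurable X) (hY : Measurable Y) (hXY : IndepFun X Y μ) {r : ℝ≥0}
    (hlaw : μ.map X = poissonMeasure r) {g : ℕ → β → ℝ≥0∞}
    (hg : Measurable (Function.uncurry g)) :
    ∫⁻ ω, X ω * g (X ω) (Y ω) ∂μ = r * ∫⁻ ω, g (X ω + 1) (Y ω) ∂μ := by
  rw [hXY.lintegral_comp_prodMk hX hY (F := fun p => p.1 * g p.1 p.2) (by fun_prop),
    hXY.lintegral_comp_prodMk hX hY (F := fun p => g (p.1 + 1) p.2) (by fun_prop),
    ← lintegral_const_mul _ (by fun_prop)]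
  simp only [hlaw, lintegral_natCast_mul_poissonMeasure]

lemma iIndepFun.indepFun_sum_mul_of_notMem {N : ι → Ω → ℕ} (hindep : iIndepFun N μ)
    (hmeas : ∀ i, Measurable (N i)) (w : ι → ℕ) {t : Finset ι} {i : ι} (hi : i ∉ t) :
    IndepFun (N i) (fun ω => ∑ j ∈ t, w j * N j ω) μ := by
  have hφ : Measurable fun v : t → ℕ => ∑ j : t, w j * v j := by fun_prop
  have := (hindep.indepFun_finset {i} t (Finset.disjoint_singleton_left.mpr hi) hmeas).comp
    (measurable_pi_apply ⟨i, Finset.mem_singleton_self i⟩) hφ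
  convert this using 1
  exacts [rfl, funext fun ω => (Finset.sum_coe_sort t fun j => w j * N j ω).symm]

lemma lintegral_natCast_mul_ite_sum_mul_eq_of_poisson [IsFiniteMeasure μ] {s : Finset ι}
    (w : ι → ℕ) {N : ι → Ω → ℕ} (hmeas : ∀ i, Measurable (N i)) (hindep : iIndepFun N μ)
    {i : ι} (hi : i ∈ s) {r : ℝ≥0} (hlaw : μ.map (N i) = poissonMeasure r) (m : ℕ) :
    ∫⁻ ω, N i ω * (if ∑ j ∈ s, w j * N j ω = m then 1 else 0) ∂μ
      = r * μ {ω | ∑ j ∈ s, w j * N j ω + w i = m} := by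
  classical
  have hsplit : ∀ ω, ∑ j ∈ s, w j * N j ω = w i * N i ω + ∑ j ∈ s.erase i, w j * N j ω :=
    fun ω => (Finset.add_sum_erase s (fun j => w j * N j ω) hi).symm
  have hindep_i := hindep.indepFun_sum_mul_of_notMem hmeas w (Finset.notMem_erase i s)
  simp only [hsplit]
  rw [hindep_i.lintegral_natCast_mul_of_poisson (hmeas i) (by fun_prop) hlaw
      (g := fun k n => if w i * k + n = m then 1 else 0) (by fun_prop),
    lintegral_ite_one (measurableSet_eq_fun (by fun_prop) measurable_const)]
  congr 2 with ω
  ring_nf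

theorem natCast_mul_measure_sum_mul_eq_of_poisson (s : Finset ι) (w : ι → ℕ) (c : ι → ℝ≥0)
    {N : ι → Ω → ℕ} (hmeas : ∀ i, Measurable (N i)) (hindep : iIndepFun N μ)
    (hlaw : ∀ i ∈ s, μ.map (N i) = poissonMeasure (c i)) (m : ℕ) :
    m * μ {ω | ∑ i ∈ s, w i * N i ω = m}
      = ∑ i ∈ s, w i * c i * μ {ω | ∑ j ∈ s, w j * N j ω + w i = m} := by
  have := hindep.isProbabilityMeasure
  set S : Ω → ℕ := fun ω => ∑ i ∈ s, w i * N i ω with hS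
  have hSmeas : Measurable S := by fun_prop
  have hind : Measurable fun ω => if S ω = m then (1 : ℝ≥0∞) else 0 :=
    (measurable_of_countable fun n => if n = m then (1 : ℝ≥0∞) else 0).comp hSmeas
  have hScast : ∀ ω, (S ω : ℝ≥0∞) = ∑ i ∈ s, (w i : ℝ≥0∞) * N i ω := fun ω => by simp [hS]
  calc (m : ℝ≥0∞) * μ {ω | S ω = m}
      = ∫⁻ ω, S ω * (if S ω = m then 1 else 0) ∂μ := by
        rw [← lintegral_ite_one (measurableSet_eq_fun hSmeas measurable_const),
          ← lintegral_const_mul _ (by fun_prop)]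
        congr 1 with ω
        split_ifs with h <;> simp [h]
    _ = ∑ i ∈ s, w i * ∫⁻ ω, N i ω * (if S ω = m then 1 else 0) ∂μ := by
        simp only [hScast, Finset.sum_mul]
        rw [lintegral_finsetSum _ fun i _ => by fun_prop]
        refine Finset.sum_congr rfl fun i _ => ?_
        rw [← lintegral_const_mul _ (by fun_prop)]
        simp only [mul_assoc]
    _ = _ := by
        refine Finset.sum_congr rfl fun i hi => ?_
        rw [lintegral_natCast_mul_ite_sum_mul_eq_of_poisson w hmeas hindep hi (hlaw i hi),
          mul_assoc]

lemma measure_forall_eq_zero_of_poisson (s : Finset ι) (c : ι → ℝ≥0) {N : ι → Ω → ℕ}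
    (hmeas : ∀ i, Measurable (N i)) (hindep : iIndepFun N μ)
    (hlaw : ∀ i ∈ s, μ.map (N i) = poissonMeasure (c i)) :
    μ {ω | ∀ i ∈ s, N i ω = 0} = ENNReal.ofReal (Real.exp (-∑ i ∈ s, (c i : ℝ))) := by
  have hset : {ω | ∀ i ∈ s, N i ω = 0} = ⋂ i ∈ s, N i ⁻¹' {0} := by ext; simp
  rw [hset, hindep.meas_biInter fun i _ => ⟨{0}, measurableSet_singleton 0, rfl⟩,
    ← Finset.sum_neg_distrib, Real.exp_sum,
    ENNReal.ofReal_prod_of_nonneg fun _ _ => (Real.exp_pos _).le]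
  refine Finset.prod_congr rfl fun i hi => ?_
  rw [← Measure.map_apply (hmeas i) (measurableSet_singleton 0), hlaw i hi,
    poissonMeasure_singleton]
  simp

lemma sum_Icc_mul_measure_add_eq (S : Ω → ℕ) (a : ℕ → ℝ≥0∞) (P m : ℕ) :
    ∑ q ∈ Finset.Icc 1 P, a q * μ {ω | S ω + q = m}
      = ∑ q ∈ Finset.Icc 1 (min m P), a q * μ {ω | S ω = m - q} := by
  rw [← Finset.sum_subset (Finset.Icc_subset_Icc_right (min_le_right m P))]
  · refine Finset.sum_congr rfl fun q hq => ?_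
    have hqm : q ≤ m := (Finset.mem_Icc.mp hq).2.trans (min_le_left m P)
    rw [show {ω | S ω + q = m} = {ω | S ω = m - q} by ext; simp only [Set.mem_ofPred_eq]; omega]
  · intro q hq hq'
    simp only [Finset.mem_Icc] at hq hq'
    have hempty : {ω | S ω + q = m} = ∅ :=
      Set.eq_empty_of_forall_notMem fun ω (h : S ω + q = m) => by omega
    rw [hempty, measure_empty, mul_zero]

end ProbabilityTheory

theorem stmt_0_general
    {Ω : Type*} [MeasureSpace Ω]
    (P : ℕ) (C : ℕ → NNReal)
    (N : ℕ → Ω → ℕ)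
    (hmeas : ∀ q, Measurable (N q))
    (hindep : iIndepFun N ℙ)
    (hdist : ∀ q ∈ Finset.Icc 1 P, Measure.map (N q) ℙ = poissonMeasure (C q))
    (S : Ω → ℕ) (hS : ∀ ω, S ω = ∑ q ∈ Finset.Icc 1 P, q * N q ω) :
    (ℙ {ω | S ω = 0}).toReal = Real.exp (-(∑ q ∈ Finset.Icc 1 P, (C q : ℝ))) ∧
    ∀ m : ℕ, 1 ≤ m →
      (ℙ {ω | S ω = m}).toReal =
        ∑ q ∈ Finset.Icc 1 (min m P),
          (q : ℝ) / (m : ℝ) * (C q : ℝ) * (ℙ {ω | S ω = m - q}).toReal := by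
  have := hindep.isProbabilityMeasure
  constructor
  · have hzero : {ω | S ω = 0} = {ω | ∀ q ∈ Finset.Icc 1 P, N q ω = 0} := by
      ext ω
      simp only [Set.mem_ofPred_eq, hS, Finset.sum_eq_zero_iff, mul_eq_zero, Finset.mem_Icc]
      exact forall₂_congr fun q hq => by omega
    rw [hzero, measure_forall_eq_zero_of_poisson _ C hmeas hindep hdist,
      ENNReal.toReal_ofReal (Real.exp_pos _).le]
  intro m hm
  have hrec := natCast_mul_measure_sum_mul_eq_of_poisson (Finset.Icc 1 P) id C hmeas hindep hdist m
  simp only [id, ← hS] at hrec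
  rw [sum_Icc_mul_measure_add_eq] at hrec
  have hreal := congrArg ENNReal.toReal hrec
  rw [ENNReal.toReal_mul, ENNReal.toReal_sum fun q _ => by finiteness] at hreal
  simp only [ENNReal.toReal_mul, ENNReal.toReal_natCast, ENNReal.coe_toReal] at hreal
  have hm0 : (m : ℝ) ≠ 0 := Nat.cast_ne_zero.mpr (by omega)
  calc (ℙ {ω | S ω = m}).toReal = m * (ℙ {ω | S ω = m}).toReal / m :=
        (mul_div_cancel_left₀ _ hm0).symm
    _ = _ := by
        rw [hreal, Finset.sum_div]
        exact Finset.sum_congr rfl fun q _ => by ring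

/-- Theorem 1 of the paper, probabilistic form.
If `N 1, …, N P` are independent Poisson random variables with means `C 1, …, C P ≥ 0`
and `S = ∑_{q=1}^P q · N q`, then `ℙ(S = 0) = exp(−∑ C q)` and for `m ≥ 1`,
`ℙ(S = m) = ∑_{q=1}^{min(m,P)} (q/m) · C q · ℙ(S = m − q)`. -/
theorem stmt_0
    {Ω : Type*} [MeasureSpace Ω] [IsProbabilityMeasure (ℙ : Measure Ω)]
    (P : ℕ) (hP : 1 ≤ P) (C : ℕ → NNReal)
    (N : ℕ → Ω → ℕ)
    (hmeas : ∀ q, Measurable (N q))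
    (hindep : iIndepFun N ℙ)
    (hdist : ∀ q ∈ Finset.Icc 1 P, Measure.map (N q) ℙ = poissonMeasure (C q))
    (S : Ω → ℕ) (hS : ∀ ω, S ω = ∑ q ∈ Finset.Icc 1 P, q * N q ω) :
    (ℙ {ω | S ω = 0}).toReal = Real.exp (-(∑ q ∈ Finset.Icc 1 P, (C q : ℝ))) ∧
    ∀ m : ℕ, 1 ≤ m →
      (ℙ {ω | S ω = m}).toReal =
        ∑ q ∈ Finset.Icc 1 (min m P),
          (q : ℝ) / (m : ℝ) * (C q : ℝ) * (ℙ {ω | S ω = m - q}).toReal :=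
  stmt_0_general P C N hmeas hindep hdist S hS
end

section
/- Let P ∈ ℕ with P ≥ 1 and let C_1, …, C_P be real numbers. Define G : ℝ → ℝ by G(t) = exp(Σ_{q=1}^P C_q (t^q − 1)). Then G is infinitely differentiable, G(0) = exp(−Σ_{q=1}^P C_q), and for every integer m ≥ 1, the m-th derivative at 0 satisfies G^{(m)}(0) = Σ_{q=1}^{min(m,P)} binom(m−1, q−1) · C_q · q! · G^{(m−q)}(0). -/
open Finset
open scoped ContDiff

lemma itd_add {f g : ℝ → ℝ} (hf : ContDiff ℝ ∞ f) (hg : ContDiff ℝ ∞ g) (n : ℕ) (x : ℝ) :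
    iteratedDeriv n (fun t => f t + g t) x = iteratedDeriv n f x + iteratedDeriv n g x := by
  have := iteratedDerivWithin_add (Set.mem_univ x) uniqueDiffOn_univ
    (f := f) (g := g) (n := n) (hf.of_le (by exact_mod_cast le_top)).contDiffWithinAt (hg.of_le (by exact_mod_cast le_top)).contDiffWithinAt
  simp only [iteratedDerivWithin_univ] at this; exact this

lemma itd_const_mul {f : ℝ → ℝ} (hf : ContDiff ℝ ∞ f) (c : ℝ) (n : ℕ) (x : ℝ) :
    iteratedDeriv n (fun t => c * f t) x = c * iteratedDeriv n f x := by
  have := iteratedDerivWithin_const_mul (Set.mem_univ x) uniqueDiffOn_univ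
    (f := f) (n := n) c (hf.of_le (by exact_mod_cast le_top)).contDiffWithinAt
  simpa [iteratedDerivWithin_univ] using this

lemma itd_sum {ι : Type*} [DecidableEq ι] (s : Finset ι) (F : ι → ℝ → ℝ)
    (h : ∀ i ∈ s, ContDiff ℝ ∞ (F i)) (n : ℕ) (x : ℝ) :
    iteratedDeriv n (fun t => ∑ i ∈ s, F i t) x = ∑ i ∈ s, iteratedDeriv n (F i) x := by
  induction s using Finset.induction with
  | empty =>
      have := itd_const_mul (f := fun _ => (1:ℝ)) contDiff_const 0 n x
      simpa using this
  | insert _ _ hnot ih =>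
      rename_i a s
      simp only [Finset.sum_insert hnot]
      have h1 : ContDiff ℝ ∞ (F a) := h a (Finset.mem_insert_self a s)
      have h2 : ContDiff ℝ ∞ (fun t => ∑ i ∈ s, F i t) :=
        ContDiff.sum fun i hi => h i (Finset.mem_insert_of_mem hi)
      rw [itd_add h1 h2, ih (fun i hi => h i (Finset.mem_insert_of_mem hi))]

lemma itd_deriv_comm {f : ℝ → ℝ} (k : ℕ) :
    iteratedDeriv k (deriv f) = iteratedDeriv (k + 1) f :=
  (iteratedDeriv_succ' ..).symm

lemma leibniz (n : ℕ) : ∀ (f g : ℝ → ℝ), ContDiff ℝ ∞ f → ContDiff ℝ ∞ g → ∀ x : ℝ,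
    iteratedDeriv n (fun t => f t * g t) x =
      ∑ k ∈ Finset.range (n + 1),
        (n.choose k : ℝ) * iteratedDeriv k f x * iteratedDeriv (n - k) g x := by
  induction n with
  | zero => intro f g hf hg x; simp
  | succ n ih =>
    intro f g hf hg x
    have hf' : ContDiff ℝ ∞ (deriv f) := (contDiff_infty_iff_deriv.mp hf).2
    have hg' : ContDiff ℝ ∞ (deriv g) := (contDiff_infty_iff_deriv.mp hg).2
    have hd : deriv (fun t => f t * g t) = fun t => deriv f t * g t + f t * deriv g t := by
      funext t
      exact deriv_mul ((hf.differentiable (by simp)) t) ((hg.differentiable (by simp)) t)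
    rw [iteratedDeriv_succ', hd,
      itd_add ((hf'.mul hg)) ((hf.mul hg')) n x,
      ih (deriv f) g hf' hg x, ih f (deriv g) hf hg' x]
    simp only [itd_deriv_comm]
    -- now combinatorics
    have key : ∀ k ∈ Finset.range (n + 1),
        (n.choose k : ℝ) * iteratedDeriv k f x * iteratedDeriv (n - k + 1) g x
        = (n.choose k : ℝ) * iteratedDeriv k f x * iteratedDeriv (n + 1 - k) g x := by
      intro k hk
      rw [Finset.mem_range] at hk
      congr 2
      omega
    rw [Finset.sum_congr rfl key]
    rw [Finset.sum_range_succ' (fun k => (( n+1).choose k : ℝ) * iteratedDeriv k f x * iteratedDeriv (n + 1 - k) g x) (n+1)]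
    rw [Finset.sum_range_succ' (fun k => (n.choose k : ℝ) * iteratedDeriv k f x * iteratedDeriv (n + 1 - k) g x) n]
    rw [Finset.sum_range_succ (fun k => (n.choose k : ℝ) * iteratedDeriv (k+1) f x * iteratedDeriv (n - k) g x) n]
    rw [Finset.sum_range_succ (fun i => ((n+1).choose (i+1) : ℝ) * iteratedDeriv (i+1) f x * iteratedDeriv (n + 1 - (i+1)) g x) n]
    have pascal : ∀ i, ((n+1).choose (i+1) : ℝ) = (n.choose i : ℝ) + (n.choose (i+1) : ℝ) := by
      intro i
      rw [Nat.choose_succ_succ]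
      push_cast
      ring
    simp only [pascal, Nat.choose_self, Nat.choose_zero_right, Nat.cast_one,
      Nat.sub_self, Nat.add_sub_cancel_left, Nat.add_sub_cancel]
    have hrw : ∀ i ∈ Finset.range n, n + 1 - (i + 1) = n - i := by intro i _; omega
    have : ∀ i ∈ Finset.range n,
        ((n.choose i : ℝ) + (n.choose (i+1) : ℝ)) * iteratedDeriv (i+1) f x * iteratedDeriv (n + 1 - (i+1)) g x
        = (n.choose i : ℝ) * iteratedDeriv (i+1) f x * iteratedDeriv (n - i) g x
          + (n.choose (i+1) : ℝ) * iteratedDeriv (i+1) f x * iteratedDeriv (n + 1 - (i+1)) g x := by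
      intro i hi
      rw [Finset.mem_range] at hi
      have : n + 1 - (i + 1) = n - i := by omega
      rw [this]; ring
    rw [Finset.sum_congr rfl this, Finset.sum_add_distrib]
    have hn : n + 1 - n = 1 := by omega
    have hchoosen : ((n.choose (n+1)) : ℝ) = 0 := by
      norm_cast
      exact Nat.choose_eq_zero_of_lt (by omega)
    ring

lemma itd_monomial (k : ℕ) : ∀ n : ℕ, iteratedDeriv k (fun t : ℝ => t ^ n) 0
    = if k = n then (n.factorial : ℝ) else 0 := by
  induction k with
  | zero =>
    intro n
    cases n with
    | zero => simp
    | succ m => simp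
  | succ k ih =>
    intro n
    have hder : deriv (fun t : ℝ => t ^ n) = fun t => (n : ℝ) * t ^ (n - 1) := by
      funext t
      simp [deriv_pow]
    rw [iteratedDeriv_succ', hder, itd_const_mul (f := fun t : ℝ => t ^ (n - 1)) (by exact contDiff_id.pow _) _ k 0, ih (n - 1)]
    cases n with
    | zero => simp
    | succ m =>
      simp only [Nat.add_sub_cancel]
      by_cases hk : k = m
      · subst hk
        rw [if_pos rfl, if_pos rfl, Nat.factorial_succ]
        push_cast
        ring
      · rw [if_neg hk, if_neg (by omega), mul_zero]

/-- displayed derivative recursion at `0`, Appendix B of the paper.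
For `G t = exp(∑_{q=1}^P C q (t^q − 1))`: `G` is smooth, `G 0 = exp(−∑ C q)`, and for
every `m ≥ 1`,
`G⁽ᵐ⁾(0) = ∑_{q=1}^{min(m,P)} binom(m−1, q−1) · C q · q! · G⁽ᵐ⁻q⁾(0)`. -/
theorem stmt_4 (P : ℕ) (hP : 1 ≤ P) (C : ℕ → ℝ)
    (G : ℝ → ℝ)
    (hG : ∀ t : ℝ, G t = Real.exp (∑ q ∈ Finset.Icc 1 P, C q * (t ^ q - 1))) :
    ContDiff ℝ (⊤ : ℕ∞) G ∧
    G 0 = Real.exp (-(∑ q ∈ Finset.Icc 1 P, C q)) ∧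
    ∀ m : ℕ, 1 ≤ m →
      iteratedDeriv m G 0 =
        ∑ q ∈ Finset.Icc 1 (min m P),
          ((m - 1).choose (q - 1) : ℝ) * C q * (q.factorial : ℝ) *
            iteratedDeriv (m - q) G 0 := by
  set A : ℝ → ℝ := fun t => ∑ q ∈ Finset.Icc 1 P, C q * (t ^ q - 1) with hA_def
  have hA : ContDiff ℝ (⊤ : ℕ∞) A :=
    ContDiff.sum fun q _ => contDiff_const.mul ((contDiff_id.pow q).sub contDiff_const)
  have hGfun : G = fun t => Real.exp (A t) := funext hG
  have hGtop : ContDiff ℝ (⊤ : ℕ∞) G := by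
    rw [hGfun]; exact Real.contDiff_exp.comp hA
  have hGinf : ContDiff ℝ ∞ G := hGtop.of_le (by simp)
  refine ⟨hGtop, ?_, ?_⟩
  · rw [hG 0]
    congr 1
    rw [← Finset.sum_neg_distrib]
    refine Finset.sum_congr rfl fun q hq => ?_
    have hq1 : q ≠ 0 := by
      rw [Finset.mem_Icc] at hq; omega
    rw [zero_pow hq1]; ring
  · set f : ℝ → ℝ := fun t => ∑ q ∈ Finset.Icc 1 P, (C q * q) * t ^ (q - 1) with hf_def
    have hf : ContDiff ℝ ∞ f :=
      ContDiff.sum fun q _ => contDiff_const.mul (contDiff_id.pow _)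
    have hderivG : deriv G = fun t => f t * G t := by
      funext t
      have hA' : HasDerivAt A (f t) t := by
        have := HasDerivAt.sum (u := Finset.Icc 1 P)
          (A := fun q x => C q * (x ^ q - 1))
          (A' := fun q => C q * (q * t ^ (q - 1))) (x := t)
          (fun q _ => (((hasDerivAt_pow q t).sub_const 1).const_mul (C q)))
        rw [Finset.sum_fn] at this
        refine this.congr_deriv ?_
        rw [hf_def]
        exact Finset.sum_congr rfl fun q _ => by ring
      have hGt : HasDerivAt G (Real.exp (A t) * f t) t := by
        rw [hGfun]; exact hA'.exp
      rw [hGt.deriv, ← hG t]; ring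
    have hfval : ∀ k : ℕ, iteratedDeriv k f 0
        = if k + 1 ≤ P then C (k + 1) * ((k + 1).factorial : ℝ) else 0 := by
      intro k
      rw [hf_def]
      rw [itd_sum (Finset.Icc 1 P) (fun q t => (C q * q) * t ^ (q - 1)) (fun q _ => by exact contDiff_const.mul (contDiff_id.pow _)) k 0]
      have hterm : ∀ q ∈ Finset.Icc 1 P,
          iteratedDeriv k (fun t => (C q * q) * t ^ (q - 1)) 0
          = (C q * q) * (if k = q - 1 then ((q - 1).factorial : ℝ) else 0) := by
        intro q _
        rw [itd_const_mul (f := fun t : ℝ => t ^ (q - 1)) (by exact contDiff_id.pow _) _ k 0, itd_monomial]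
      rw [Finset.sum_congr rfl hterm]
      by_cases hk : k + 1 ≤ P
      · rw [if_pos hk]
        rw [Finset.sum_eq_single_of_mem (k + 1) (Finset.mem_Icc.mpr ⟨by omega, hk⟩)]
        · simp only [Nat.add_sub_cancel, if_pos rfl, Nat.factorial_succ]
          push_cast
          ring
        · intro q hq hne
          rw [Finset.mem_Icc] at hq
          rw [if_neg (by omega), mul_zero]
      · rw [if_neg hk]
        refine Finset.sum_eq_zero fun q hq => ?_
        rw [Finset.mem_Icc] at hq
        rw [if_neg (by omega), mul_zero]
    intro m hm
    obtain ⟨n, rfl⟩ : ∃ n, m = n + 1 := ⟨m - 1, by omega⟩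
    rw [iteratedDeriv_succ', hderivG, leibniz n f G hf hGinf 0]
    simp only [hfval]
    rw [← Finset.Ico_add_one_right_eq_Icc, Finset.sum_Ico_eq_sum_range]
    have hmin : min (n + 1) P + 1 - 1 = min (n + 1) P := by omega
    rw [hmin]
    rw [← Finset.sum_subset (Finset.range_subset_range.mpr (by omega : min (n + 1) P ≤ n + 1))
      (fun k _ hk => ?_)]
    · refine Finset.sum_congr rfl fun k hk => ?_
      rw [Finset.mem_range] at hk
      have hkP : k + 1 ≤ P := by omega
      rw [if_pos hkP]
      have h1 : 1 + k - 1 = k := by omega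
      have h2 : n + 1 - 1 = n := by omega
      have h3 : n + 1 - (1 + k) = n - k := by omega
      rw [h1, h2, h3, show 1 + k = k + 1 from by omega]
      ring
    · rw [Finset.mem_range] at *
      have : ¬ (k + 1 ≤ P) := by omega
      rw [if_neg this]
      ring
end

section
/- Let λ > 0, P_Rx > 0, κ > 0, α > 0, and p ≥ 0. Let ζ = 10/ln(10), μ ∈ ℝ, σ > 0, and let f_χ(w) = (ζ/(w σ √(2π))) · exp(−(10·log₁₀(w) − μ)²/(2σ²)) for w > 0. Then λ · ∫₀^∞ vol₂({x ∈ ℝ² : P_Rx·κ·‖x‖^α / w ≤ p}) · f_χ(w) dw = λ · π · (p/(κ·P_Rx))^{2/α} · Υ_χ, where vol₂ denotes two-dimensional Lebesgue measure and Υ_χ = exp((2/α)·μ/ζ + (1/2)·((2/α)/ζ)²·σ²). -/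
/-!
For fixed shadowing `w` the sublevel set is the disc of radius `(p w / (κ P_Rx))^{1/α}`, of
area `π (p / (κ P_Rx))^{2/α} w^{2/α}`, so the integral is `π (p / (κ P_Rx))^{2/α}` times the
moment `E[χ^{2/α}]` of the log-normal shadowing. Since `log χ` is Gaussian with mean `μ/ζ` and
variance `(σ/ζ)²`, this moment is the Gaussian moment generating function at `2/α`, i.e. `Υ_χ`.
-/

open MeasureTheory ProbabilityTheory Real Set Metric

/-- Density of `χ` when `ζ log χ` is Gaussian with mean `μ` and standard deviation `σ`
(with `ζ = 10 / log 10`, `σ` and `μ` are in decibels). -/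
noncomputable def logNormalPDF (ζ μ σ w : ℝ) : ℝ :=
  ζ / (w * σ * √(2 * π)) * exp (-(ζ * log w - μ) ^ 2 / (2 * σ ^ 2))

theorem integral_Ioi_zero_eq_integral_comp_exp {E : Type*} [NormedAddCommGroup E]
    [NormedSpace ℝ E] (g : ℝ → E) :
    ∫ w in Ioi 0, g w = ∫ u, exp u • g (exp u) := by
  have := integral_image_eq_integral_abs_deriv_smul MeasurableSet.univ
    (fun u _ => (hasDerivAt_exp u).hasDerivWithinAt) exp_injective.injOn g
  simpa [range_exp, abs_of_pos (exp_pos _)] using this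

theorem exp_mul_logNormalPDF_exp {ζ σ : ℝ} (hζ : 0 < ζ) (hσ : 0 < σ) {v : NNReal}
    (hv : (v : ℝ) = (σ / ζ) ^ 2) (μ u : ℝ) :
    exp u * logNormalPDF ζ μ σ (exp u) = gaussianPDFReal (μ / ζ) v u := by
  have hsqrt : √(2 * π * (σ / ζ) ^ 2) = √(2 * π) * σ / ζ := by
    rw [sqrt_mul (by positivity), sqrt_sq (by positivity), mul_div_assoc]
  have hexponent :
      -(ζ * u - μ) ^ 2 / (2 * σ ^ 2) = -(u - μ / ζ) ^ 2 / (2 * (σ / ζ) ^ 2) := by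
    field_simp
  rw [logNormalPDF, gaussianPDFReal_def, hv, hsqrt, log_exp, hexponent]
  field_simp

theorem integral_rpow_mul_logNormalPDF {ζ σ : ℝ} (hζ : 0 < ζ) (hσ : 0 < σ) (μ s : ℝ) :
    ∫ w in Ioi 0, w ^ s * logNormalPDF ζ μ σ w =
      exp (s * μ / ζ + 1 / 2 * (s / ζ) ^ 2 * σ ^ 2) := by
  obtain ⟨v, hv⟩ : ∃ v : NNReal, (v : ℝ) = (σ / ζ) ^ 2 := ⟨⟨_, sq_nonneg _⟩, rfl⟩
  have hv0 : v ≠ 0 := by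
    rw [ne_eq, ← NNReal.coe_eq_zero, hv]
    positivity
  calc ∫ w in Ioi 0, w ^ s * logNormalPDF ζ μ σ w
      = ∫ u, gaussianPDFReal (μ / ζ) v u • exp (s * u) := by
        rw [integral_Ioi_zero_eq_integral_comp_exp]
        congr 1 with u
        rw [← exp_mul_logNormalPDF_exp hζ hσ hv, smul_eq_mul, smul_eq_mul, ← exp_mul,
          mul_comm u s]
        ring
    _ = mgf id (gaussianReal (μ / ζ) v) s := by
        rw [mgf, ← integral_gaussianReal_eq_integral_smul hv0]
        rfl
    _ = exp (s * μ / ζ + 1 / 2 * (s / ζ) ^ 2 * σ ^ 2) := by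
        rw [mgf_id_gaussianReal, hv]
        ring_nf

theorem setOf_norm_rpow_le_eq_closedBall {E : Type*} [SeminormedAddCommGroup E] {α t : ℝ}
    (hα : 0 < α) (ht : 0 ≤ t) : {x : E | ‖x‖ ^ α ≤ t} = closedBall 0 (t ^ α⁻¹) := by
  ext x
  rw [mem_ofPred_eq, mem_closedBall_zero_iff, le_rpow_inv_iff_of_pos (norm_nonneg x) ht hα]

theorem volume_setOf_norm_rpow_le_fin_two {α t : ℝ} (hα : 0 < α) (ht : 0 ≤ t) :
    (volume {x : EuclideanSpace ℝ (Fin 2) | ‖x‖ ^ α ≤ t}).toReal = π * t ^ (2 / α) := by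
  rw [setOf_norm_rpow_le_eq_closedBall hα ht, EuclideanSpace.volume_closedBall_fin_two,
    ENNReal.toReal_mul, ENNReal.toReal_pow, ENNReal.toReal_ofReal (by positivity),
    ENNReal.toReal_ofReal pi_nonneg, ← rpow_natCast, ← rpow_mul ht]
  ring_nf

theorem stmt_7_general (lam PRx κ α p : ℝ)
    (hPRx : 0 < PRx) (hκ : 0 < κ) (hα : 0 < α) (hp : 0 ≤ p)
    (ζ μ σ : ℝ) (hζ : ζ = 10 / Real.log 10) (hσ : 0 < σ)
    (f : ℝ → ℝ)
    (hf : ∀ w : ℝ, 0 < w →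
      f w = ζ / (w * σ * Real.sqrt (2 * Real.pi)) *
        Real.exp (-(10 * Real.logb 10 w - μ) ^ 2 / (2 * σ ^ 2))) :
    lam * ∫ w in Set.Ioi (0 : ℝ),
        (volume {x : EuclideanSpace ℝ (Fin 2) | PRx * (κ * ‖x‖ ^ α) / w ≤ p}).toReal * f w =
      lam * (Real.pi * (p / (κ * PRx)) ^ (2 / α) *
        Real.exp ((2 / α) * μ / ζ + (1 / 2) * ((2 / α) / ζ) ^ 2 * σ ^ 2)) := by
  have hζ0 : 0 < ζ := by rw [hζ]; exact div_pos (by norm_num) (log_pos (by norm_num))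
  have hf_eq : ∀ w, 0 < w → f w = logNormalPDF ζ μ σ w := fun w hw => by
    rw [hf w hw, logNormalPDF, show 10 * logb 10 w = ζ * log w by rw [logb, hζ]; ring]
  have hvol : ∀ w, 0 < w →
      (volume {x : EuclideanSpace ℝ (Fin 2) | PRx * (κ * ‖x‖ ^ α) / w ≤ p}).toReal =
        π * (p / (κ * PRx)) ^ (2 / α) * w ^ (2 / α) := fun w hw => by
    have hset : {x : EuclideanSpace ℝ (Fin 2) | PRx * (κ * ‖x‖ ^ α) / w ≤ p} =
        {x | ‖x‖ ^ α ≤ p / (κ * PRx) * w} := by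
      ext x
      rw [mem_ofPred_eq, mem_ofPred_eq, div_le_iff₀ hw, div_mul_eq_mul_div,
        le_div_iff₀ (by positivity)]
      ring_nf
    rw [hset, volume_setOf_norm_rpow_le_fin_two hα (by positivity),
      mul_rpow (by positivity) hw.le, mul_assoc]
  congr 1
  calc ∫ w in Ioi 0,
        (volume {x : EuclideanSpace ℝ (Fin 2) | PRx * (κ * ‖x‖ ^ α) / w ≤ p}).toReal * f w
      = ∫ w in Ioi 0,
          π * (p / (κ * PRx)) ^ (2 / α) * (w ^ (2 / α) * logNormalPDF ζ μ σ w) :=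
        setIntegral_congr_fun measurableSet_Ioi fun w hw => by
          rw [hvol w hw, hf_eq w hw, mul_assoc]
    _ = _ := by rw [integral_const_mul, integral_rpow_mul_logNormalPDF hζ0 hσ]

/-- Eq. (14), Appendix A of the paper: intensity of required powers.
With log-normal shadowing density `f` and path-loss `κ r^α`, the mean measure of base
stations whose required transmit power (to satisfy the received power constraint
`P_Rx`) is at most `p` equals `λ π (p/(κ P_Rx))^{2/α} Υ_χ`. -/
theorem stmt_7 (lam PRx κ α p : ℝ)
    (hlam : 0 < lam) (hPRx : 0 < PRx) (hκ : 0 < κ) (hα : 0 < α) (hp : 0 ≤ p)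
    (ζ μ σ : ℝ) (hζ : ζ = 10 / Real.log 10) (hσ : 0 < σ)
    (f : ℝ → ℝ)
    (hf : ∀ w : ℝ, 0 < w →
      f w = ζ / (w * σ * Real.sqrt (2 * Real.pi)) *
        Real.exp (-(10 * Real.logb 10 w - μ) ^ 2 / (2 * σ ^ 2))) :
    lam * ∫ w in Set.Ioi (0 : ℝ),
        (volume {x : EuclideanSpace ℝ (Fin 2) | PRx * (κ * ‖x‖ ^ α) / w ≤ p}).toReal * f w =
      lam * (Real.pi * (p / (κ * PRx)) ^ (2 / α) *
        Real.exp ((2 / α) * μ / ζ + (1 / 2) * ((2 / α) / ζ) ^ 2 * σ ^ 2)) :=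
  stmt_7_general lam PRx κ α p hPRx hκ hα hp ζ μ σ hζ hσ f hf
end

section
/- Let λ_B > 0, Υ > 0, α > 0 and define Λ_B(p) = λ_B·Υ·p^{2/α} for p ≥ 0. Let L ∈ ℕ, let v_0, …, v_L ≥ 0, and let 0 = t_0 < t_1 < ⋯ < t_L be real thresholds. For q > 0 let l*(q) denote the least index l ∈ {1,…,L} such that q ≤ t_l (defined whenever q ≤ t_L). Then for every k ∈ {1,…,L} and every p with t_{k−1} < p ≤ t_k, ∫₀^p (Σ_{l=l*(q)}^{L} v_l) · Λ_B'(q) dq = Σ_{l=0}^{k−1} v_l·Λ_B(t_l) + (Σ_{l=k}^{L} v_l)·Λ_B(p), where Λ_B'(q) = λ_B·Υ·(2/α)·q^{(2/α)−1}. -/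
/-!
The weight `∑_{l ≥ l*(q)} v_l` is constant, equal to `∑_{l ≥ j+1} v_l`, on each interval
`(t_j, t_{j+1}]`, and `Λ_B' = λ_B Υ (2/α) q^{2/α - 1}` integrates to `Λ_B` because `2/α - 1 > -1`.
So the integral splits into the telescoping pieces `(∑_{l ≥ j+1} v_l) (Λ_B(t_{j+1}) - Λ_B(t_j))`
plus a last piece over `(t_{k-1}, p]`, and Abel summation together with `Λ_B(t_0) = Λ_B(0) = 0`
turns this into the stated closed form.
-/

open MeasureTheory Set

theorem integral_mul_rpow_sub_one {s : ℝ} (hs : 0 < s) (c a b : ℝ) :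
    ∫ q in a..b, c * s * q ^ (s - 1) = c * b ^ s - c * a ^ s := by
  rw [intervalIntegral.integral_const_mul, integral_rpow (Or.inl (by linarith)), sub_add_cancel]
  field_simp

theorem intervalIntegrable_mul_rpow_sub_one {s : ℝ} (hs : 0 < s) (c a b : ℝ) :
    IntervalIntegrable (fun q => c * s * q ^ (s - 1)) volume a b :=
  (intervalIntegral.intervalIntegrable_rpow' (by linarith)).const_mul _

section PiecewiseConstantWeight

variable {c g G : ℝ → ℝ} {w : ℝ} {a b : ℝ}

theorem intervalIntegrable_mul_of_eqOn_Ioc (hab : a ≤ b) (hc : EqOn c (fun _ => w) (Ioc a b))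
    (hg : IntervalIntegrable g volume a b) :
    IntervalIntegrable (fun q => c q * g q) volume a b := by
  refine (hg.const_mul w).congr fun q hq => ?_
  rw [uIoc_of_le hab] at hq
  simp only [hc hq]

theorem integral_mul_of_eqOn_Ioc (hab : a ≤ b) (hc : EqOn c (fun _ => w) (Ioc a b))
    (hG : ∫ q in a..b, g q = G b - G a) :
    ∫ q in a..b, c q * g q = w * (G b - G a) := by
  rw [← hG, ← intervalIntegral.integral_const_mul]
  refine intervalIntegral.integral_congr_ae (Filter.Eventually.of_forall fun q hq => ?_)
  rw [uIoc_of_le hab] at hq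
  simp only [hc hq]

variable {t W : ℕ → ℝ} {n : ℕ}

theorem integral_mul_eq_sum_of_eqOn_Ioc (hg : ∀ a b, IntervalIntegrable g volume a b)
    (hG : ∀ a b, ∫ q in a..b, g q = G b - G a) (ht : ∀ j < n, t j ≤ t (j + 1))
    (hc : ∀ j < n, EqOn c (fun _ => W (j + 1)) (Ioc (t j) (t (j + 1))))
    {m : ℕ} (hm : m < n) {p : ℝ} (hp : p ∈ Icc (t m) (t (m + 1))) :
    ∫ q in t 0..p, c q * g q =
      ∑ j ∈ Finset.range m, W (j + 1) * (G (t (j + 1)) - G (t j)) + W (m + 1) * (G p - G (t m)) := by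
  have hcg : ∀ j < n, IntervalIntegrable (fun q => c q * g q) volume (t j) (t (j + 1)) :=
    fun j hj => intervalIntegrable_mul_of_eqOn_Ioc (ht j hj) (hc j hj) (hg _ _)
  have hlast : EqOn c (fun _ => W (m + 1)) (Ioc (t m) p) :=
    (hc m hm).mono (Ioc_subset_Ioc_right hp.2)
  rw [← intervalIntegral.integral_add_adjacent_intervals
      (IntervalIntegrable.trans_iterate fun j hj => hcg j (hj.trans hm))
      (intervalIntegrable_mul_of_eqOn_Ioc hp.1 hlast (hg _ _)),
    ← intervalIntegral.sum_integral_adjacent_intervals fun j hj => hcg j (hj.trans hm),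
    integral_mul_of_eqOn_Ioc hp.1 hlast (hG _ _)]
  congr 1
  refine Finset.sum_congr rfl fun j hj => ?_
  have hjn : j < n := (Finset.mem_range.1 hj).trans hm
  exact integral_mul_of_eqOn_Ioc (ht j hjn) (hc j hjn) (hG _ _)

end PiecewiseConstantWeight

theorem sum_mul_sub_add_mul_sub_eq {R : Type*} [CommRing R] {v W a : ℕ → R} (ha : a 0 = 0) (x : R) (m : ℕ)
    (hW : ∀ j ≤ m, W j = v j + W (j + 1)) :
    ∑ j ∈ Finset.range m, W (j + 1) * (a (j + 1) - a j) + W (m + 1) * (x - a m) =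
      ∑ l ∈ Finset.range (m + 1), v l * a l + W (m + 1) * x := by
  induction m generalizing x with
  | zero => simp [ha]
  | succ m ih =>
    have hsplit := ih (a (m + 1)) fun j hj => hW j (by omega)
    rw [Finset.sum_range_succ, hsplit, Finset.sum_range_succ _ (m + 1), hW (m + 1) le_rfl]
    ring

theorem Finset.sum_Icc_eq_add_sum_Icc_add_one {M : Type*} [AddCommMonoid M] {v : ℕ → M} {j L : ℕ}
    (h : j ≤ L) :
    ∑ l ∈ Finset.Icc j L, v l = v j + ∑ l ∈ Finset.Icc (j + 1) L, v l := by
  rw [Finset.Icc_add_one_left_eq_Ioc, Finset.add_sum_Ioc_eq_sum_Icc h]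

theorem eq_add_one_of_isLeast_of_mem_Ioc {t : ℕ → ℝ} {L i j : ℕ} {q : ℝ}
    (ht : StrictMonoOn t (Iic L)) (hi : IsLeast {l ∈ Icc 1 L | q ≤ t l} i) (hj : j < L)
    (hq : q ∈ Ioc (t j) (t (j + 1))) : i = j + 1 := by
  obtain ⟨⟨⟨-, hiL⟩, hqi⟩, hleast⟩ := hi
  have hle : i ≤ j + 1 := hleast ⟨⟨by omega, hj⟩, hq.2⟩
  by_contra hne
  have : t i ≤ t j := ht.monotoneOn hiL (show j ≤ L by omega) (by omega)
  linarith [hq.1]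

theorem stmt_10_general (lamB Υ α : ℝ) (hα : 0 < α)
    (ΛB : ℝ → ℝ) (hΛB : ∀ p : ℝ, ΛB p = lamB * Υ * p ^ (2 / α))
    (L : ℕ) (v : ℕ → ℝ)
    (t : ℕ → ℝ) (ht0 : t 0 = 0) (htmono : ∀ i < L, t i < t (i + 1))
    (lstar : ℝ → ℕ)
    (hlstar : ∀ q : ℝ, 0 < q → q ≤ t L →
      lstar q ∈ Finset.Icc 1 L ∧ q ≤ t (lstar q) ∧
        ∀ l ∈ Finset.Icc 1 L, q ≤ t l → lstar q ≤ l) :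
    ∀ k ∈ Finset.Icc 1 L, ∀ p : ℝ, t (k - 1) < p → p ≤ t k →
      ∫ q in (0 : ℝ)..p,
          (∑ l ∈ Finset.Icc (lstar q) L, v l) * (lamB * Υ * (2 / α) * q ^ (2 / α - 1)) =
        ∑ l ∈ Finset.range k, v l * ΛB (t l) + (∑ l ∈ Finset.Icc k L, v l) * ΛB p := by
  intro k hk p hp₁ hp₂
  obtain ⟨m, rfl⟩ : ∃ m, k = m + 1 := ⟨k - 1, by grind⟩
  have hmL : m < L := by grind
  rw [Nat.add_sub_cancel] at hp₁
  have hs : 0 < 2 / α := by positivity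
  have ht : StrictMonoOn t (Iic L) := strictMonoOn_Iic_of_lt_succ htmono
  have hweight : ∀ j < L, EqOn (fun q => ∑ l ∈ Finset.Icc (lstar q) L, v l)
      (fun _ => ∑ l ∈ Finset.Icc (j + 1) L, v l) (Ioc (t j) (t (j + 1))) := by
    intro j hj q hq
    have hq₀ : 0 < q := ht0 ▸ (ht.monotoneOn (Nat.zero_le L) hj.le (Nat.zero_le j)).trans_lt hq.1
    have hqL : q ≤ t L := hq.2.trans (ht.monotoneOn hj (le_refl L) hj)
    obtain ⟨hmem, hle, hmin⟩ := hlstar q hq₀ hqL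
    have hleast : IsLeast {l ∈ Icc 1 L | q ≤ t l} (lstar q) :=
      ⟨⟨Finset.mem_Icc.1 hmem, hle⟩, fun l hl => hmin l (Finset.mem_Icc.2 hl.1) hl.2⟩
    simp only [eq_add_one_of_isLeast_of_mem_Ioc ht hleast hj hq]
  rw [← ht0, integral_mul_eq_sum_of_eqOn_Ioc (G := ΛB) (W := fun i => ∑ l ∈ Finset.Icc i L, v l)
    (fun a b => intervalIntegrable_mul_rpow_sub_one hs _ a b)
    (fun a b => by simpa only [hΛB] using integral_mul_rpow_sub_one hs _ a b)
    (fun j hj => (htmono j hj).le) hweight hmL ⟨hp₁.le, hp₂⟩]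
  exact sum_mul_sub_add_mul_sub_eq (a := fun j => ΛB (t j))
    (by simp [hΛB, ht0, Real.zero_rpow hs.ne']) (ΛB p) m
    fun j hj => Finset.sum_Icc_eq_add_sum_Icc_add_one (by omega)

/-- Lemma 1, Eq. (10) of the paper: intensity of available base
stations. With `Λ_B(p) = λ_B Υ p^{2/α}`, battery probabilities `v_0,…,v_L`,
thresholds `0 = t_0 < t_1 < ⋯ < t_L` and `l*(q)` the least `l ∈ {1,…,L}` with
`q ≤ t_l`, for every `k ∈ {1,…,L}` and `t_{k−1} < p ≤ t_k`,
`∫₀^p (∑_{l=l*(q)}^L v_l) Λ_B'(q) dq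
  = ∑_{l=0}^{k−1} v_l Λ_B(t_l) + (∑_{l=k}^L v_l) Λ_B(p)`. -/
theorem stmt_10 (lamB Υ α : ℝ) (hlamB : 0 < lamB) (hΥ : 0 < Υ) (hα : 0 < α)
    (ΛB : ℝ → ℝ) (hΛB : ∀ p : ℝ, ΛB p = lamB * Υ * p ^ (2 / α))
    (L : ℕ) (v : ℕ → ℝ) (hv : ∀ l, 0 ≤ v l)
    (t : ℕ → ℝ) (ht0 : t 0 = 0) (htmono : ∀ i < L, t i < t (i + 1))
    (lstar : ℝ → ℕ)
    (hlstar : ∀ q : ℝ, 0 < q → q ≤ t L →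
      lstar q ∈ Finset.Icc 1 L ∧ q ≤ t (lstar q) ∧
        ∀ l ∈ Finset.Icc 1 L, q ≤ t l → lstar q ≤ l) :
    ∀ k ∈ Finset.Icc 1 L, ∀ p : ℝ, t (k - 1) < p → p ≤ t k →
      ∫ q in (0 : ℝ)..p,
          (∑ l ∈ Finset.Icc (lstar q) L, v l) * (lamB * Υ * (2 / α) * q ^ (2 / α - 1)) =
        ∑ l ∈ Finset.range k, v l * ΛB (t l) + (∑ l ∈ Finset.Icc k L, v l) * ΛB p :=
  stmt_10_general lamB Υ α hα ΛB hΛB L v t ht0 htmono lstar hlstar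
end
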